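/- arXiv:2008.02240 — 3 statements merged into one kernel-verified Lean document; each statement's English description precedes it below -/
import Mathlib

section
/- The generating function F(x) = sum over n of (number of Schröder paths of semilength n avoiding the consecutive pattern UF) x^n satisfies the algebraic equation F(x) = 1 + 2x F(x) + x (F(x) - 1 - x F(x)) F(x). -/
open PowerSeries

inductive Step : Type
  | U | D | F
  deriving DecidableEq

def Step.len : Step → ℕ
  | .U => 1 | .D => 1 | .F => 2

def Step.alt : Step → ℤ
  | .U => 1 | .D => -1 | .F => 0

/-- Total length (x-displacement) of a path. -/
def pathLen (w : List Step) : ℕ := (w.map Step.len).sum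

/-- Final altitude (y-displacement) of a path. -/
def pathAlt (w : List Step) : ℤ := (w.map Step.alt).sum

/-- A Schröder path of semilength `n`: from (0,0) to (2n,0), never below the x-axis. -/
def IsSchroeder (n : ℕ) (w : List Step) : Prop :=
  pathLen w = 2 * n ∧ pathAlt w = 0 ∧ ∀ p : List Step, p <+: w → 0 ≤ pathAlt p

/-- `w` avoids the consecutive pattern `UF`. -/
def AvoidsUF (w : List Step) : Prop := ¬ ([Step.U, Step.F] <:+: w)

/-- Number of ascents: maximal nonempty runs of consecutive up-steps,
counted via their last up-step. -/
def ascents (w : List Step) : ℕ :=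
  (List.range w.length).countP
    (fun i => decide (w[i]? = some Step.U ∧ w[i+1]? ≠ some Step.U))

noncomputable def schroederCount (n : ℕ) : ℕ :=
  Nat.card {w : List Step // IsSchroeder n w}

noncomputable def schroederUFCount (n : ℕ) : ℕ :=
  Nat.card {w : List Step // IsSchroeder n w ∧ AvoidsUF w}

noncomputable def totalAscents (n : ℕ) : ℕ :=
  ∑ᶠ w ∈ {w : List Step | IsSchroeder n w}, ascents w

noncomputable def totalAscentsSq (n : ℕ) : ℕ :=
  ∑ᶠ w ∈ {w : List Step | IsSchroeder n w}, (ascents w) ^ 2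

noncomputable def ascCount (n k : ℕ) : ℕ :=
  Nat.card {w : List Step // IsSchroeder n w ∧ ascents w = k}

noncomputable def vv : PowerSeries (Polynomial ℚ) :=
  PowerSeries.C (R := Polynomial ℚ) Polynomial.X

/-!
First-return decomposition. A nonempty Schröder path is either `F w` or `U q D r`, where `q D`
is the shortest prefix of the remainder that goes below the axis; `q` and `r` are Schröder
paths and they are determined by the path. Such a path avoids `UF` iff `w` does, resp. iff
`q` and `r` do and `q` does not start with `F`. The avoiding paths that do not start with `F`
have generating function `A - xA` (remove the paths `F w`), so `A = 1 + xA + x(A - xA)A`,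
which is the claimed equation rearranged.
-/

namespace List

variable {α : Type*}

lemma forall_prefix_cons {P : List α → Prop} {a : α} {w : List α} :
    (∀ p, p <+: a :: w → P p) ↔ P [] ∧ ∀ p, p <+: w → P (a :: p) := by
  simp only [prefix_cons_iff]
  grind

lemma forall_prefix_append {P : List α → Prop} {v w : List α} :
    (∀ p, p <+: v ++ w → P p) ↔ (∀ p, p <+: v → P p) ∧ ∀ p, p <+: w → P (v ++ p) := by
  induction v generalizing P with
  | nil => simp only [nil_append, prefix_nil, forall_eq]; grind
  | cons a v ih => simp only [cons_append, forall_prefix_cons, ih]; tauto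

end List

namespace SchroederPath

open Step Finset

@[simp] lemma pathLen_nil : pathLen [] = 0 := rfl

@[simp] lemma pathAlt_nil : pathAlt [] = 0 := rfl

@[simp] lemma pathLen_cons (a : Step) (w : List Step) : pathLen (a :: w) = a.len + pathLen w := by
  simp [pathLen]

@[simp] lemma pathAlt_cons (a : Step) (w : List Step) : pathAlt (a :: w) = a.alt + pathAlt w := by
  simp [pathAlt]

@[simp] lemma pathLen_append (v w : List Step) : pathLen (v ++ w) = pathLen v + pathLen w := by
  simp [pathLen]

@[simp] lemma pathAlt_append (v w : List Step) : pathAlt (v ++ w) = pathAlt v + pathAlt w := by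
  simp [pathAlt]

lemma length_le_pathLen (w : List Step) : w.length ≤ pathLen w := by
  induction w with
  | nil => rfl
  | cons a w ih => cases a <;> simp only [List.length_cons, pathLen_cons, Step.len] <;> omega

lemma two_dvd_pathLen_sub_pathAlt (w : List Step) : (2 : ℤ) ∣ pathLen w - pathAlt w := by
  induction w with
  | nil => simp
  | cons a w ih =>
    cases a <;> simp only [pathLen_cons, pathAlt_cons, Step.len, Step.alt, Nat.cast_add] <;> omega

def IsPath (w : List Step) : Prop := pathAlt w = 0 ∧ ∀ p, p <+: w → 0 ≤ pathAlt p

lemma isSchroeder_iff (n : ℕ) (w : List Step) :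
    IsSchroeder n w ↔ pathLen w = 2 * n ∧ IsPath w := Iff.rfl

lemma IsPath.isSchroeder {w : List Step} (hw : IsPath w) : IsSchroeder (pathLen w / 2) w := by
  have := two_dvd_pathLen_sub_pathAlt w
  rw [hw.1, sub_zero] at this
  exact ⟨by omega, hw⟩

lemma isPath_nil : IsPath [] := ⟨rfl, by simp⟩

lemma not_isPath_D_cons (w : List Step) : ¬ IsPath (D :: w) := fun hw => by
  simpa [Step.alt] using hw.2 [D] (by simp)

lemma isPath_F_cons {w : List Step} : IsPath (F :: w) ↔ IsPath w := by
  simp [IsPath, List.forall_prefix_cons, Step.alt]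

lemma isPath_U_cons_append_D_cons {q r : List Step} (hq : IsPath q) :
    IsPath (U :: q ++ D :: r) ↔ IsPath r := by
  obtain ⟨hq, hqpre⟩ := hq
  simp only [IsPath, List.cons_append, List.forall_prefix_cons, List.forall_prefix_append,
    pathAlt_cons, pathAlt_append, pathAlt_nil, hq, Step.alt, add_zero, zero_add,
    add_neg_cancel_left, le_refl, zero_le_one, true_and]
  exact ⟨fun h => ⟨h.1, h.2.2⟩, fun h => ⟨h.1, fun p hp => by linarith [hqpre p hp], h.2⟩⟩

lemma exists_first_descent (t : List Step) {c : ℤ} (hc : 0 ≤ c) (ht : c + pathAlt t < 0) :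
    ∃ q r, t = q ++ D :: r ∧ c + pathAlt q = 0 ∧ ∀ p, p <+: q → 0 ≤ c + pathAlt p := by
  induction t generalizing c with
  | nil => simp only [pathAlt_nil, add_zero] at ht; omega
  | cons a t ih =>
    by_cases hstop : a = D ∧ c = 0
    · obtain ⟨rfl, rfl⟩ := hstop
      exact ⟨[], t, rfl, rfl, by simp⟩
    have hc' : 0 ≤ c + a.alt := by cases a <;> grind [Step.alt]
    obtain ⟨q, r, rfl, hq, hpre⟩ := ih hc' (by rw [pathAlt_cons] at ht; omega)
    refine ⟨a :: q, r, rfl, by rw [pathAlt_cons]; omega,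
      List.forall_prefix_cons.mpr ⟨by simpa, fun p hp => ?_⟩⟩
    have := hpre p hp
    rw [pathAlt_cons]; omega

lemma isPath_U_cons {t : List Step} :
    IsPath (U :: t) ↔ ∃ q r, t = q ++ D :: r ∧ IsPath q ∧ IsPath r := by
  constructor
  · intro ht
    have halt := ht.1
    simp only [pathAlt_cons, Step.alt] at halt
    obtain ⟨q, r, rfl, hq⟩ := exists_first_descent t le_rfl (by omega)
    simp only [zero_add] at hq
    exact ⟨q, r, rfl, hq, (isPath_U_cons_append_D_cons hq).mp ht⟩
  · rintro ⟨q, r, rfl, hq, hr⟩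
    exact (isPath_U_cons_append_D_cons hq).mpr hr

lemma avoidsUF_iff_isChain (w : List Step) :
    AvoidsUF w ↔ w.IsChain (fun a b => ¬ (a = U ∧ b = F)) := by
  rw [List.isChain_iff_forall_rel_of_append_cons_cons, AvoidsUF, List.IsInfix]
  constructor
  · rintro h a b l₁ l₂ rfl ⟨rfl, rfl⟩
    exact h ⟨l₁, l₂, by simp⟩
  · rintro h ⟨l₁, l₂, rfl⟩
    exact h (l₁ := l₁) (l₂ := l₂) (by simp) ⟨rfl, rfl⟩

lemma avoidsUF_F_cons {w : List Step} : AvoidsUF (F :: w) ↔ AvoidsUF w := by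
  simp [avoidsUF_iff_isChain, List.isChain_cons]

lemma avoidsUF_U_cons_append_D_cons {q r : List Step} :
    AvoidsUF (U :: q ++ D :: r) ↔ (AvoidsUF q ∧ q.head? ≠ some F) ∧ AvoidsUF r := by
  simp only [avoidsUF_iff_isChain, List.cons_append, List.isChain_cons, List.isChain_append,
    List.head?_append, List.head?_cons]
  rcases q.head? with _ | a <;> simp [and_comm, and_assoc]

/-- Otherwise `q ++ [D]`, which ends at height `-1`, would be a prefix of `q'`. -/
lemma length_le_of_append_D_cons_eq {q q' r r' : List Step} (hq : pathAlt q = 0)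
    (hq' : IsPath q') (h : q ++ D :: r = q' ++ D :: r') : q'.length ≤ q.length := by
  by_contra hlt
  have hpre : q ++ [D] <+: q' := by
    refine List.prefix_of_prefix_length_le ?_ (List.prefix_append q' (D :: r'))
      (by simp only [List.length_append, List.length_singleton]; omega)
    rw [← h]
    simp
  simpa [hq, Step.alt] using hq'.2 _ hpre

lemma append_D_cons_inj {q q' r r' : List Step} (hq : IsPath q) (hq' : IsPath q')
    (h : q ++ D :: r = q' ++ D :: r') : q = q' ∧ r = r' := by
  have hlen := le_antisymm (length_le_of_append_D_cons_eq hq'.1 hq h.symm)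
    (length_le_of_append_D_cons_eq hq.1 hq' h)
  obtain ⟨rfl, hr⟩ := List.append_inj h hlen
  exact ⟨rfl, List.cons_injective hr⟩

instance : Fintype Step :=
  ⟨⟨{U, D, F}, by decide⟩, by rintro (_ | _ | _) <;> decide⟩

lemma finite_setOf_isSchroeder (n : ℕ) : {w | IsSchroeder n w}.Finite :=
  (List.finite_length_le Step (2 * n)).subset fun w hw => hw.1 ▸ length_le_pathLen w

lemma isSchroeder_F_cons {n : ℕ} {w : List Step} :
    IsSchroeder (n + 1) (F :: w) ↔ IsSchroeder n w := by
  simp only [isSchroeder_iff, isPath_F_cons, pathLen_cons, Step.len]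
  exact and_congr_left fun _ => by omega

noncomputable def avoiders (n : ℕ) : Finset (List Step) :=
  Set.Finite.toFinset (s := {w | IsSchroeder n w ∧ AvoidsUF w})
    ((finite_setOf_isSchroeder n).subset fun _ hw => hw.1)

lemma mem_avoiders {n : ℕ} {w : List Step} : w ∈ avoiders n ↔ IsSchroeder n w ∧ AvoidsUF w :=
  Set.Finite.mem_toFinset _

lemma schroederUFCount_eq_card (n : ℕ) : schroederUFCount n = (avoiders n).card := by
  rw [schroederUFCount, avoiders, ← Set.ncard_eq_toFinset_card _ _]
  rfl

lemma avoiders_zero : avoiders 0 = {[]} := by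
  ext w
  simp only [mem_avoiders, isSchroeder_iff, mem_singleton, mul_zero]
  constructor
  · rintro ⟨⟨hlen, -⟩, -⟩
    simpa [hlen] using length_le_pathLen w
  · rintro rfl
    exact ⟨⟨rfl, isPath_nil⟩, by simp [AvoidsUF]⟩

noncomputable def avoidersNoLeadingF (n : ℕ) : Finset (List Step) :=
  (avoiders n).filter (·.head? ≠ some F)

lemma filter_avoiders_succ_head_eq_F (n : ℕ) :
    (avoiders (n + 1)).filter (·.head? = some F) =
      (avoiders n).map ⟨(F :: ·), List.cons_injective⟩ := by
  ext w
  simp only [mem_filter, mem_map, mem_avoiders, List.head?_eq_some_iff, Function.Embedding.coeFn_mk]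
  constructor
  · rintro ⟨hw, w', rfl⟩
    exact ⟨w', by rwa [isSchroeder_F_cons, avoidsUF_F_cons] at hw, rfl⟩
  · rintro ⟨w', hw', rfl⟩
    exact ⟨by rwa [isSchroeder_F_cons, avoidsUF_F_cons], w', rfl⟩

lemma card_avoiders_succ (n : ℕ) :
    (avoiders (n + 1)).card = (avoidersNoLeadingF (n + 1)).card + (avoiders n).card := by
  rw [← card_filter_add_card_filter_not (·.head? = some F),
    filter_avoiders_succ_head_eq_F, card_map, add_comm]
  rfl

lemma mem_avoidersNoLeadingF_succ {n : ℕ} {w : List Step} :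
    w ∈ avoidersNoLeadingF (n + 1) ↔ ∃ i j q r, i + j = n ∧ q ∈ avoidersNoLeadingF i ∧
      r ∈ avoiders j ∧ w = U :: q ++ D :: r := by
  simp only [avoidersNoLeadingF, mem_filter, mem_avoiders, isSchroeder_iff]
  constructor
  · rintro ⟨⟨⟨hlen, hw⟩, havoid⟩, hhead⟩
    obtain _ | ⟨_ | _ | _, t⟩ := w
    · simp at hlen
    · obtain ⟨q, r, rfl, hq, hr⟩ := isPath_U_cons.mp hw
      obtain ⟨⟨hqa, hqhead⟩, hra⟩ := avoidsUF_U_cons_append_D_cons.mp havoid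
      obtain ⟨hqlen, -⟩ := hq.isSchroeder
      obtain ⟨hrlen, -⟩ := hr.isSchroeder
      refine ⟨_, _, q, r, ?_, ⟨⟨⟨hqlen, hq⟩, hqa⟩, hqhead⟩, ⟨⟨hrlen, hr⟩, hra⟩, rfl⟩
      simp only [pathLen_cons, Step.len, pathLen_append] at hlen
      omega
    · exact absurd hw (not_isPath_D_cons t)
    · simp at hhead
  · rintro ⟨i, j, q, r, rfl, ⟨⟨⟨hqlen, hq⟩, hqa⟩, hqhead⟩, ⟨⟨hrlen, hr⟩, hra⟩, rfl⟩
    refine ⟨⟨⟨?_, (isPath_U_cons_append_D_cons hq).mpr hr⟩,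
      avoidsUF_U_cons_append_D_cons.mpr ⟨⟨hqa, hqhead⟩, hra⟩⟩, by simp⟩
    simp only [List.cons_append, pathLen_cons, Step.len, pathLen_append, hqlen, hrlen]
    ring

lemma avoidersNoLeadingF_succ (n : ℕ) :
    avoidersNoLeadingF (n + 1) =
      ((antidiagonal n).sigma fun p => avoidersNoLeadingF p.1 ×ˢ avoiders p.2).image
        fun x => U :: x.2.1 ++ D :: x.2.2 := by
  ext w
  simp only [mem_avoidersNoLeadingF_succ, mem_image, mem_sigma, HasAntidiagonal.mem_antidiagonal,
    mem_product]
  constructor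
  · rintro ⟨i, j, q, r, hij, hq, hr, rfl⟩
    exact ⟨⟨(i, j), (q, r)⟩, ⟨hij, hq, hr⟩, rfl⟩
  · rintro ⟨⟨⟨i, j⟩, ⟨q, r⟩⟩, ⟨hij, hq, hr⟩, rfl⟩
    exact ⟨i, j, q, r, hij, hq, hr, rfl⟩

lemma card_avoidersNoLeadingF_succ (n : ℕ) :
    (avoidersNoLeadingF (n + 1)).card =
      ∑ p ∈ antidiagonal n, (avoidersNoLeadingF p.1).card * (avoiders p.2).card := by
  rw [avoidersNoLeadingF_succ, card_image_of_injOn, card_sigma]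
  · simp only [card_product]
  rintro ⟨⟨i, j⟩, ⟨q, r⟩⟩ hx ⟨⟨i', j'⟩, ⟨q', r'⟩⟩ hx' h
  simp only [coe_sigma, Set.mem_sigma_iff, mem_coe, HasAntidiagonal.mem_antidiagonal, mem_product,
    avoidersNoLeadingF, mem_filter, mem_avoiders, isSchroeder_iff] at hx hx' h
  obtain ⟨hij, ⟨⟨⟨hqlen, hq⟩, -⟩, -⟩, -⟩ := hx
  obtain ⟨hij', ⟨⟨⟨hqlen', hq'⟩, -⟩, -⟩, -⟩ := hx'
  obtain ⟨rfl, rfl⟩ := append_D_cons_inj hq hq' (List.cons_injective h)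
  obtain ⟨rfl, rfl⟩ : i = i' ∧ j = j' := by omega
  rfl

section GeneratingFunctions

variable (R : Type*) [CommRing R]

noncomputable def avoidersGF : R⟦X⟧ := mk fun n => ((avoiders n).card : R)

noncomputable def noLeadingFGF : R⟦X⟧ := mk fun n => ((avoidersNoLeadingF n).card : R)

lemma noLeadingFGF_eq : noLeadingFGF R = avoidersGF R - X * avoidersGF R := by
  ext (_ | n)
  · simp [noLeadingFGF, avoidersGF, avoidersNoLeadingF, avoiders_zero, Finset.filter_singleton]
  · simp [noLeadingFGF, avoidersGF, coeff_succ_X_mul, card_avoiders_succ]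

lemma avoidersGF_eq :
    avoidersGF R = 1 + X * avoidersGF R + X * (noLeadingFGF R * avoidersGF R) := by
  ext (_ | n)
  · simp [avoidersGF, avoiders_zero]
  · rw [map_add, map_add, coeff_one, if_neg n.succ_ne_zero, zero_add, coeff_succ_X_mul,
      coeff_succ_X_mul, coeff_mul]
    simp only [avoidersGF, noLeadingFGF, coeff_mk, card_avoiders_succ,
      card_avoidersNoLeadingF_succ]
    push_cast
    ring

end GeneratingFunctions

end SchroederPath

open SchroederPath in
theorem stmt0 (F : PowerSeries ℚ)
    (hF : F = PowerSeries.mk fun n => (schroederUFCount n : ℚ)) :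
    F = 1 + 2 * X * F + X * (F - 1 - X * F) * F := by
  obtain rfl : F = avoidersGF ℚ := by simp only [hF, avoidersGF, schroederUFCount_eq_card]
  linear_combination avoidersGF_eq ℚ + X * avoidersGF ℚ * noLeadingFGF_eq ℚ
end

section
/- Let r_n = [x^n] (1 - x - sqrt(1-6x+x^2))/(2x) be the large Schröder numbers. Then r_n ~ (1/2) * (2*sqrt(8))^{1/2} / (2*sqrt(pi)) * (3 - sqrt(8))^{-n - 1/2} * n^{-3/2} as n → ∞, i.e., the ratio of the two sides tends to 1. -/
open PowerSeries

/-!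
With `α = 3 + √8` and `β = 3 - √8 = α⁻¹` we have `1 - 6x + x² = (1 - βx)(1 - αx)`, so `s` is the
product of the binomial series `√(1 - βx)` and `√(1 - αx)`, and `[xⁿ]E = -[xⁿ⁺¹]s / 2`.
The coefficients of `√(1 - αx)` are `-(α/2)(α/4)ⁿ Cₙ` with `Cₙ` the Catalan numbers, so Stirling's
formula gives their asymptotics and their consecutive ratios tend to `α⁻¹`. Since `√(1 - βx)`
converges well beyond `α⁻¹`, dominated convergence shows that multiplying by it only rescales the
asymptotics by the constant `√(1 - β/α)`.
-/

open Filter Topology Asymptotics Finset Real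

theorem PowerSeries.eq_of_sq_eq_sq {R : Type*} [CommRing R] [NoZeroDivisors R] [NeZero (2 : R)]
    {f g : R⟦X⟧} (h : f ^ 2 = g ^ 2) (hfg : constantCoeff f = constantCoeff g)
    (hg : constantCoeff g ≠ 0) : f = g := by
  refine ((Commute.all f g).sq_eq_sq_iff_eq_or_eq_neg.mp h).resolve_right fun hneg => hg ?_
  rw [hneg, map_neg, neg_eq_iff_add_eq_zero, ← two_mul] at hfg
  exact (mul_eq_zero.mp hfg).resolve_left two_ne_zero

lemma catalan_le_catalan_succ (n : ℕ) : catalan n ≤ catalan (n + 1) := by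
  rw [catalan_succ']
  calc catalan n = catalan 0 * catalan n := by rw [catalan_zero, one_mul]
    _ ≤ ∑ ij ∈ antidiagonal n, catalan ij.1 * catalan ij.2 :=
      single_le_sum (f := fun ij : ℕ × ℕ => catalan ij.1 * catalan ij.2)
        (fun _ _ => Nat.zero_le _) (mem_antidiagonal.mpr (zero_add n) : (0, n) ∈ antidiagonal n)

lemma catalan_mono : Monotone catalan := monotone_nat_of_le_succ catalan_le_catalan_succ

lemma catalan_pos (n : ℕ) : 0 < catalan n :=
  (catalan_zero ▸ Nat.one_pos : 0 < catalan 0).trans_le (catalan_mono (Nat.zero_le n))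

lemma catalan_le_four_pow (n : ℕ) : catalan n ≤ 4 ^ n :=
  calc catalan n ≤ (n + 1) * catalan n := Nat.le_mul_of_pos_left _ n.succ_pos
    _ = n.centralBinom := succ_mul_catalan_eq_centralBinom n
    _ ≤ 4 ^ n := Nat.centralBinom_le_four_pow n

lemma add_two_mul_catalan_succ (n : ℕ) :
    (n + 2) * catalan (n + 1) = 2 * (2 * n + 1) * catalan n := by
  refine Nat.eq_of_mul_eq_mul_left n.succ_pos ?_
  calc (n + 1) * ((n + 2) * catalan (n + 1))
      = (n + 1) * (n + 1).centralBinom := by rw [← succ_mul_catalan_eq_centralBinom]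
    _ = 2 * (2 * n + 1) * n.centralBinom := Nat.succ_mul_centralBinom_succ n
    _ = (n + 1) * (2 * (2 * n + 1) * catalan n) := by
      rw [← succ_mul_catalan_eq_centralBinom]; ring

lemma tendsto_catalan_div_catalan_succ :
    Tendsto (fun n => (catalan n : ℝ) / catalan (n + 1)) atTop (𝓝 (1 / 4)) := by
  have h := tendsto_add_mul_div_add_mul_atTop_nhds (2 : ℝ) 2 1 (d := 4) (by norm_num)
  refine h.congr fun n => ?_
  have hrec : ((n : ℝ) + 2) * catalan (n + 1) = 2 * (2 * n + 1) * catalan n := by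
    exact_mod_cast add_two_mul_catalan_succ n
  have := (Nat.cast_pos (α := ℝ)).mpr (catalan_pos n)
  have := (Nat.cast_pos (α := ℝ)).mpr (catalan_pos (n + 1))
  field_simp
  linear_combination hrec

lemma centralBinom_isEquivalent :
    (fun n : ℕ => (n.centralBinom : ℝ)) ~[atTop] fun n => 4 ^ n / √(π * n) := by
  have h2n : Tendsto (fun n : ℕ => 2 * n) atTop atTop := tendsto_id.const_mul_atTop' two_pos
  have hnum := Stirling.factorial_isEquivalent_stirling.comp_tendsto h2n
  have hden := Stirling.factorial_isEquivalent_stirling.pow 2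
  refine ((hnum.div hden).congr_left ?_).congr_right ?_
  · refine Eventually.of_forall fun n => ?_
    simp only [Function.comp_apply, Pi.div_apply, Pi.pow_apply]
    rw [Nat.centralBinom_eq_two_mul_choose, Nat.cast_choose ℝ (by omega : n ≤ 2 * n),
      show 2 * n - n = n by omega, sq]
  · filter_upwards [eventually_ge_atTop 1] with n hn
    have hn : (0 : ℝ) < n := by exact_mod_cast hn
    simp only [Function.comp_apply, Pi.div_apply, Pi.pow_apply]
    have hsqrt : √(2 * ((2 * n : ℕ) : ℝ) * π) = 2 * √(π * n) := by
      rw [show 2 * ((2 * n : ℕ) : ℝ) * π = 2 ^ 2 * (π * n) by push_cast; ring,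
        sqrt_mul (by positivity), sqrt_sq zero_le_two]
    have hpow : (((2 * n : ℕ) : ℝ) / rexp 1) ^ (2 * n) = 4 ^ n * ((n / rexp 1) ^ n) ^ 2 := by
      push_cast; rw [mul_div_assoc, mul_pow, pow_mul, pow_mul']; norm_num
    rw [hsqrt, hpow, mul_pow, sq_sqrt (by positivity)]
    have : 0 < √(π * n) := by positivity
    field_simp
    exact sq_sqrt (by positivity)

lemma catalan_isEquivalent :
    (fun n : ℕ => (catalan n : ℝ)) ~[atTop] fun n => 4 ^ n / (√(π * n) * n) := by
  have hsucc : (fun n : ℕ => (n : ℝ) + 1) ~[atTop] fun n => (n : ℝ) :=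
    IsEquivalent.refl.add_const_of_norm_tendsto_atTop
      (tendsto_norm_atTop_atTop.comp tendsto_natCast_atTop_atTop)
  refine ((centralBinom_isEquivalent.div hsucc).congr_left ?_).congr_right ?_
  · refine Eventually.of_forall fun n => ?_
    simp only [Pi.div_apply]
    rw [← succ_mul_catalan_eq_centralBinom]
    push_cast
    field_simp
  · exact Eventually.of_forall fun n => div_div _ _ _

lemma tendsto_div_sub_of_tendsto_div_succ {𝕜 : Type*} [NormedField 𝕜] {u : ℕ → 𝕜} {r : 𝕜}
    (hu : ∀ n, u n ≠ 0) (h : Tendsto (fun n => u n / u (n + 1)) atTop (𝓝 r)) (k : ℕ) :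
    Tendsto (fun n => u (n - k) / u n) atTop (𝓝 (r ^ k)) := by
  induction k with
  | zero => simp [div_self (hu _)]
  | succ k ih =>
    rw [pow_succ']
    refine ((h.comp (tendsto_sub_atTop_nat (k + 1))).mul ih).congr' ?_
    filter_upwards [eventually_ge_atTop (k + 1)] with n hn
    rw [Function.comp_apply, show n - (k + 1) + 1 = n - k by omega,
      div_mul_div_cancel₀ (hu _)]

theorem PowerSeries.tendsto_coeff_mul_div_coeff {𝕜 : Type*} [NormedField 𝕜] [CompleteSpace 𝕜]
    {A B : 𝕜⟦X⟧} {r : 𝕜} {g : ℕ → ℝ}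
    (hA : ∀ k, Tendsto (fun n => coeff (n - k) A / coeff n A) atTop (𝓝 (r ^ k)))
    (hdom : ∀ n k, k ≤ n → ‖coeff k B * (coeff (n - k) A / coeff n A)‖ ≤ g k)
    (hg : Summable g) :
    Tendsto (fun n => coeff n (B * A) / coeff n A) atTop (𝓝 (∑' k, coeff k B * r ^ k)) := by
  set F : ℕ → ℕ → 𝕜 := fun n k => if k ≤ n then coeff k B * (coeff (n - k) A / coeff n A) else 0
  have hF (n : ℕ) : ∑' k, F n k = coeff n (B * A) / coeff n A := by
    rw [tsum_eq_sum (s := range (n + 1)) fun k hk => if_neg (by simp at hk; omega), coeff_mul,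
      Nat.sum_antidiagonal_eq_sum_range_succ_mk, sum_div]
    refine sum_congr rfl fun k hk => ?_
    rw [if_pos (by simp at hk; omega), mul_div_assoc]
  have hlim (k : ℕ) : Tendsto (fun n => F n k) atTop (𝓝 (coeff k B * r ^ k)) :=
    ((hA k).const_mul _).congr' <| by
      filter_upwards [eventually_ge_atTop k] with n hn
      simp [F, hn]
  have hbound (n k : ℕ) : ‖F n k‖ ≤ g k := by
    by_cases hk : k ≤ n
    · simpa [F, hk] using hdom n k hk
    · simpa [F, hk] using (norm_nonneg _).trans (hdom k k le_rfl)
  simpa only [hF] using tendsto_tsum_of_dominated_convergence hg hlim (.of_forall hbound)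

noncomputable def sqrtOneSub (a : ℝ) : ℝ⟦X⟧ :=
  rescale (-a) (binomialSeries ℝ (1 / 2 : ℝ))

lemma coeff_sqrtOneSub (a : ℝ) (n : ℕ) :
    coeff n (sqrtOneSub a) = Ring.choose (1 / 2 : ℝ) n * (-a) ^ n := by
  simp [sqrtOneSub, coeff_rescale, mul_comm]

@[simp] lemma constantCoeff_sqrtOneSub (a : ℝ) : constantCoeff (sqrtOneSub a) = 1 := by
  simp [sqrtOneSub, ← coeff_zero_eq_constantCoeff_apply, coeff_rescale]

lemma sqrtOneSub_sq (a : ℝ) : sqrtOneSub a ^ 2 = 1 - C a * X := by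
  rw [sqrtOneSub, ← map_pow, sq, ← binomialSeries_add, add_halves,
    show (1 : ℝ) = ((1 : ℕ) : ℝ) by simp, binomialSeries_nat]
  simp [sub_eq_add_neg]

lemma sqrtOneSub_eq_catalanSeries (a : ℝ) :
    sqrtOneSub a = 1 - C (a / 2) * X * rescale (a / 4) (map (Nat.castRingHom ℝ) catalanSeries) := by
  refine eq_of_sq_eq_sq ?_ (by simp) (by simp)
  have hcat := congrArg (fun f => rescale (a / 4) (map (Nat.castRingHom ℝ) f))
    catalanSeries_sq_mul_X_add_one
  simp only [map_add, map_mul, map_pow, map_X, rescale_X, map_one] at hcat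
  have h2 : (C (a / 2) : ℝ⟦X⟧) = 2 * C (a / 4) := by rw [← map_ofNat C, ← map_mul]; ring_nf
  have h4 : (C a : ℝ⟦X⟧) = 4 * C (a / 4) := by rw [← map_ofNat C, ← map_mul]; ring_nf
  rw [sqrtOneSub_sq, h2, h4]
  linear_combination (-4 * C (a / 4) * X) * hcat

lemma coeff_succ_sqrtOneSub (a : ℝ) (k : ℕ) :
    coeff (k + 1) (sqrtOneSub a) = -(a / 2) * (a / 4) ^ k * catalan k := by
  rw [sqrtOneSub_eq_catalanSeries, mul_comm (C _), mul_assoc, map_sub, coeff_succ_X_mul,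
    coeff_one, if_neg k.succ_ne_zero, coeff_C_mul, coeff_rescale, coeff_map, catalanSeries_coeff,
    eq_natCast, zero_sub]
  ring

lemma hasSum_coeff_sqrtOneSub_mul_pow {a x : ℝ} (hax : |a * x| < 1) :
    HasSum (fun n => coeff n (sqrtOneSub a) * x ^ n) (√(1 - a * x)) := by
  have hmem : -(a * x) ∈ Metric.eball (0 : ℝ) 1 := by
    rwa [Metric.mem_eball, edist_zero_right, enorm_eq_ofReal_abs, ENNReal.ofReal_lt_one, abs_neg]
  have := one_add_rpow_hasFPowerSeriesOnBall_zero (a := 1 / 2) |>.hasSum hmem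
  simp only [binomialSeries_apply, List.ofFn_const, List.prod_replicate, smul_eq_mul,
    ← sub_eq_add_neg, zero_sub, ← sqrt_eq_rpow] at this
  simpa only [coeff_sqrtOneSub, mul_assoc, ← mul_pow, neg_mul] using this

lemma abs_coeff_sqrtOneSub_le (a : ℝ) (n : ℕ) : |coeff n (sqrtOneSub a)| ≤ |a| ^ n := by
  rcases n with _ | m
  · simp
  rw [coeff_succ_sqrtOneSub, abs_mul, abs_mul, abs_neg, abs_div, abs_pow, abs_div, Nat.abs_cast,
    abs_two, abs_of_pos (four_pos : (0 : ℝ) < 4)]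
  have hcat : (catalan m : ℝ) ≤ 4 ^ m := by exact_mod_cast catalan_le_four_pow m
  calc |a| / 2 * (|a| / 4) ^ m * catalan m ≤ |a| / 2 * (|a| / 4) ^ m * 4 ^ m := by gcongr
    _ = |a| ^ (m + 1) / 2 := by rw [div_pow]; field_simp; ring
    _ ≤ |a| ^ (m + 1) := by linarith [pow_nonneg (abs_nonneg a) (m + 1)]

lemma coeff_sqrtOneSub_ne_zero {a : ℝ} (ha : a ≠ 0) (n : ℕ) : coeff n (sqrtOneSub a) ≠ 0 := by
  rcases n with _ | m
  · simp
  simp [coeff_succ_sqrtOneSub, ha, (catalan_pos m).ne']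

lemma tendsto_coeff_sqrtOneSub_div_coeff_succ {a : ℝ} (ha : a ≠ 0) :
    Tendsto (fun n => coeff n (sqrtOneSub a) / coeff (n + 1) (sqrtOneSub a)) atTop (𝓝 a⁻¹) := by
  rw [← tendsto_add_atTop_iff_nat 1]
  have h := tendsto_catalan_div_catalan_succ.mul_const (4 / a)
  rw [show 1 / 4 * (4 / a) = a⁻¹ by field_simp] at h
  refine h.congr fun m => ?_
  rw [coeff_succ_sqrtOneSub, coeff_succ_sqrtOneSub]
  have := catalan_pos m
  have := catalan_pos (m + 1)
  field_simp
  ring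

lemma abs_coeff_succ_sqrtOneSub_div_pow {a : ℝ} (ha : 0 < a) (m : ℕ) :
    |coeff (m + 1) (sqrtOneSub a)| / (a / 4) ^ (m + 1) = 2 * catalan m := by
  rw [coeff_succ_sqrtOneSub, abs_mul, abs_mul, abs_neg, abs_of_pos (by positivity : 0 < a / 2),
    abs_of_pos (by positivity : 0 < (a / 4) ^ m), Nat.abs_cast]
  field_simp
  ring

lemma monotone_abs_coeff_sqrtOneSub_div_pow {a : ℝ} (ha : 0 < a) :
    Monotone fun n => |coeff n (sqrtOneSub a)| / (a / 4) ^ n := by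
  refine monotone_nat_of_le_succ fun n => ?_
  rcases n with _ | m
  · rw [abs_coeff_succ_sqrtOneSub_div_pow ha]
    norm_num
  simp only [abs_coeff_succ_sqrtOneSub_div_pow ha]
  gcongr
  exact catalan_le_catalan_succ m

lemma abs_coeff_sub_div_coeff_sqrtOneSub_le {a : ℝ} (ha : 0 < a) {n k : ℕ} (hk : k ≤ n) :
    |coeff (n - k) (sqrtOneSub a) / coeff n (sqrtOneSub a)| ≤ (4 / a) ^ k := by
  have hmono := monotone_abs_coeff_sqrtOneSub_div_pow ha (Nat.sub_le n k)
  rw [div_le_div_iff₀ (by positivity) (by positivity), ← pow_sub_mul_pow (a / 4) hk,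
    ← mul_assoc, mul_right_comm] at hmono
  have hshift := le_of_mul_le_mul_right hmono (by positivity)
  have hinv : (a / 4) ^ k * (4 / a) ^ k = 1 := by
    rw [← mul_pow, show a / 4 * (4 / a) = 1 by field_simp, one_pow]
  rw [abs_div, div_le_iff₀ (abs_pos.mpr (coeff_sqrtOneSub_ne_zero ha.ne' n))]
  calc |coeff (n - k) (sqrtOneSub a)|
      = |coeff (n - k) (sqrtOneSub a)| * (a / 4) ^ k * (4 / a) ^ k := by
        rw [mul_assoc, hinv, mul_one]
    _ ≤ |coeff n (sqrtOneSub a)| * (4 / a) ^ k := by gcongr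
    _ = (4 / a) ^ k * |coeff n (sqrtOneSub a)| := mul_comm _ _

lemma coeff_succ_sqrtOneSub_isEquivalent {a : ℝ} (ha : a ≠ 0) :
    (fun n : ℕ => coeff (n + 1) (sqrtOneSub a)) ~[atTop]
      fun n => -(a / 2) * a ^ n / (√(π * n) * n) := by
  refine ((IsEquivalent.refl (u := fun n : ℕ => -(a / 2) * (a / 4) ^ n)).mul
    catalan_isEquivalent).congr_left ?_ |>.congr_right ?_
  · exact .of_forall fun n => by simp [coeff_succ_sqrtOneSub]
  · refine .of_forall fun n => ?_
    simp only [Pi.mul_apply]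
    rw [div_pow]
    field_simp

/-- `4 * |b| < a` is what makes the crude bound `(4/a)ᵏ` on the ratios
`[xⁿ⁻ᵏ]√(1 - ax) / [xⁿ]√(1 - ax)` summable against `|[xᵏ]√(1 - bx)| ≤ |b|ᵏ`. -/
theorem coeff_succ_sqrtOneSub_mul_isEquivalent {a b : ℝ} (ha : 0 < a) (hb : 4 * |b| < a) :
    (fun n : ℕ => coeff (n + 1) (sqrtOneSub b * sqrtOneSub a)) ~[atTop]
      fun n => -(a / 2 * √(1 - b / a)) * a ^ n / (√(π * n) * n) := by
  have hq : 4 * |b| / a < 1 := (div_lt_one ha).mpr hb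
  have hdom (n k : ℕ) (hk : k ≤ n) :
      ‖coeff k (sqrtOneSub b) * (coeff (n - k) (sqrtOneSub a) / coeff n (sqrtOneSub a))‖ ≤
        (4 * |b| / a) ^ k := by
    rw [norm_mul, Real.norm_eq_abs, Real.norm_eq_abs, mul_comm 4, mul_div_assoc, mul_pow]
    exact mul_le_mul (abs_coeff_sqrtOneSub_le b k) (abs_coeff_sub_div_coeff_sqrtOneSub_le ha hk)
      (abs_nonneg _) (by positivity)
  have hsum : HasSum (fun k => coeff k (sqrtOneSub b) * a⁻¹ ^ k) √(1 - b / a) := by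
    refine div_eq_mul_inv b a ▸ hasSum_coeff_sqrtOneSub_mul_pow ?_
    rw [abs_mul, abs_inv, abs_of_pos ha, ← div_eq_mul_inv, div_lt_one ha]
    linarith [abs_nonneg b]
  have hratio : Tendsto (fun n : ℕ => coeff (n + 1) (sqrtOneSub b * sqrtOneSub a) /
      coeff (n + 1) (sqrtOneSub a)) atTop (𝓝 √(1 - b / a)) := by
    rw [← hsum.tsum_eq]
    exact (tendsto_coeff_mul_div_coeff
      (tendsto_div_sub_of_tendsto_div_succ (coeff_sqrtOneSub_ne_zero ha.ne')
        (tendsto_coeff_sqrtOneSub_div_coeff_succ ha.ne')) hdom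
      (summable_geometric_of_lt_one (by positivity) hq)).comp (tendsto_add_atTop_nat 1)
  have hba : b / a < 1 := by
    rw [div_lt_one ha]; linarith [le_abs_self b, abs_nonneg b]
  refine (((isEquivalent_const_iff_tendsto (sqrt_ne_zero'.mpr (by linarith))).mpr hratio).mul
    (coeff_succ_sqrtOneSub_isEquivalent ha.ne')).congr_left ?_ |>.congr_right ?_
  · exact .of_forall fun n => div_mul_cancel₀ _ (coeff_sqrtOneSub_ne_zero ha.ne' _)
  · refine .of_forall fun n => ?_
    simp only [Pi.mul_apply, Function.const_apply]
    ring

lemma sqrt_eight_lt_three : √8 < 3 := by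
  rw [show (3 : ℝ) = √(3 ^ 2) by rw [sqrt_sq (by norm_num)]]
  exact sqrt_lt_sqrt (by norm_num) (by norm_num)

lemma three_add_sqrt_eight_mul : (3 + √8) * (3 - √8) = 1 := by
  nlinarith [sq_sqrt (show (0 : ℝ) ≤ 8 by norm_num)]

lemma one_sub_six_mul_X_add_X_sq :
    (1 - 6 * X + X ^ 2 : ℝ⟦X⟧) = (1 - C (3 - √8) * X) * (1 - C (3 + √8) * X) := by
  have hsum : C (3 - √8) + C (3 + √8) = (6 : ℝ⟦X⟧) := by
    rw [← map_add, show 3 - √8 + (3 + √8) = (6 : ℝ) by ring, map_ofNat]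
  have hprod : C (3 - √8) * C (3 + √8) = (1 : ℝ⟦X⟧) := by
    rw [← map_mul, mul_comm, three_add_sqrt_eight_mul, map_one]
  linear_combination X * hsum - X ^ 2 * hprod

lemma rpow_three_sub_sqrt_eight (n : ℕ) :
    (3 - √8) ^ (-(n : ℝ) - 1 / 2) = (3 + √8) ^ n * √(3 + √8) := by
  have hβ : 0 < 3 - √8 := sub_pos.mpr sqrt_eight_lt_three
  rw [show -(n : ℝ) - 1 / 2 = -((n : ℝ) + 1 / 2) by ring, rpow_neg hβ.le, rpow_add hβ,
    rpow_natCast, ← sqrt_eq_rpow, mul_inv, ← inv_pow, ← sqrt_inv,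
    inv_eq_of_mul_eq_one_right (mul_comm (3 + √8) _ ▸ three_add_sqrt_eight_mul)]

lemma schroeder_leading_term_eq {n : ℕ} (hn : 0 < n) :
    -(1 / 2) * (-((3 + √8) / 2 * √(1 - (3 - √8) / (3 + √8))) * (3 + √8) ^ n / (√(π * n) * n)) =
      1 / 2 * √(2 * √8) / (2 * √π) * (3 - √8) ^ (-(n : ℝ) - 1 / 2) * (n : ℝ) ^ (-(3 : ℝ) / 2) := by
  have hα : 0 < 3 + √8 := by positivity
  have hn : (0 : ℝ) < n := by exact_mod_cast hn
  have hratio : 1 - (3 - √8) / (3 + √8) = 2 * √8 / (3 + √8) := by field_simp; ring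
  have hn32 : (n : ℝ) ^ (-(3 : ℝ) / 2) = (n * √n)⁻¹ := by
    rw [show -(3 : ℝ) / 2 = -(1 + 1 / 2) by norm_num, rpow_neg hn.le, rpow_add hn, rpow_one,
      ← sqrt_eq_rpow]
  rw [hratio, sqrt_div' _ hα.le, rpow_three_sub_sqrt_eight, hn32, sqrt_mul pi_pos.le]
  have hsα : √(3 + √8) ^ 2 = 3 + √8 := sq_sqrt hα.le
  have : 0 < √(3 + √8) := sqrt_pos.mpr hα
  have : 0 < √(n : ℝ) := sqrt_pos.mpr hn
  have : 0 < √π := sqrt_pos.mpr pi_pos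
  field_simp
  linear_combination -hsα

theorem stmt9 (s E : PowerSeries ℝ)
    (hs : s ^ 2 = 1 - 6 * X + X ^ 2)
    (hs0 : constantCoeff (R := ℝ) s = 1)
    (hE : 2 * X * E = 1 - X - s) :
    Filter.Tendsto
      (fun n : ℕ =>
        coeff (R := ℝ) n E /
          ((1 / 2) * Real.sqrt (2 * Real.sqrt 8) / (2 * Real.sqrt Real.pi) *
            (3 - Real.sqrt 8) ^ (-(n : ℝ) - 1 / 2) * (n : ℝ) ^ (-(3 : ℝ) / 2)))
      Filter.atTop (nhds 1) := by
  have hs_eq : s = sqrtOneSub (3 - √8) * sqrtOneSub (3 + √8) :=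
    eq_of_sq_eq_sq (by rw [hs, mul_pow, sqrtOneSub_sq, sqrtOneSub_sq, one_sub_six_mul_X_add_X_sq])
      (by simp [hs0]) (by simp)
  have hcoeff (n : ℕ) (hn : 1 ≤ n) : coeff n E = -(1 / 2) * coeff (n + 1) s := by
    have h := congrArg (coeff (n + 1)) hE
    rw [mul_comm 2 X, mul_assoc, coeff_succ_X_mul, map_sub, map_sub, coeff_one, coeff_X,
      if_neg (by omega), if_neg (by omega), show (2 : ℝ⟦X⟧) = C 2 from (map_ofNat C 2).symm,
      coeff_C_mul] at h
    linarith
  have hequiv := coeff_succ_sqrtOneSub_mul_isEquivalent (a := 3 + √8) (b := 3 - √8)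
    (by positivity) (by
      rw [abs_of_pos (sub_pos.mpr sqrt_eight_lt_three)]
      nlinarith [sq_sqrt (show (0 : ℝ) ≤ 8 by norm_num), sqrt_nonneg 8])
  refine (isEquivalent_iff_tendsto_one ?_).mp <|
    ((IsEquivalent.refl (u := fun _ : ℕ => -(1 / 2 : ℝ))).mul hequiv).congr_left ?_
      |>.congr_right ?_
  · have hβ := sub_pos.mpr sqrt_eight_lt_three
    filter_upwards [eventually_gt_atTop 0] with n hn
    have hn : (0 : ℝ) < n := by exact_mod_cast hn
    positivity
  · filter_upwards [eventually_ge_atTop 1] with n hn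
    simp [hcoeff n hn, hs_eq]
  · filter_upwards [eventually_gt_atTop 0] with n hn
    exact schroeder_leading_term_eq hn
end

section
/- The number of Schröder paths of semilength n with exactly k ascents, summed as sum_k c(n,k) v^k x^n over all n and k, gives the unique formal power series solution with constant term 1 of the equation E = 1 + xvE + x(1+x(v-1))E^2; in particular the coefficient polynomials h_n(v) = sum_k c(n,k) v^k satisfy h_n(1) = r_n (the n-th large Schröder number) and h_n(0) = 1 for all n ≥ 0. -/
open PowerSeries

/-- The polynomial `h_n(v) = ∑_k c(n,k) v^k` counting Schröder paths of semilength `n`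
by number of ascents (a path of semilength `n` has at most `n` ascents). -/
noncomputable def hpoly (n : ℕ) : Polynomial ℚ :=
  ∑ k ∈ Finset.range (n + 1), Polynomial.C (ascCount n k : ℚ) * Polynomial.X ^ k


/-!
A nonempty Schröder path is uniquely `F w` or `U w₁ D w₂` with `w₁`, `w₂` Schröder paths (split
at the first return to the axis). The `D` separates the ascents of `U w₁` from those of `w₂`, and
`U w₁` has one ascent more than `w₁` exactly when `w₁` does not start with `U`, i.e. when `w₁` is
empty or `F w'`. For the ascent series `E` this gives `E = 1 + x E + x P E` with
`P = E + (v - 1) (1 + x E)`, which rearranges to the quadratic equation.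

Two solutions `A`, `B` of `A = 1 + x a A + x b A²` satisfy `A - B = x (a + b (A + B)) (A - B)`, so
`A - B` is divisible by every power of `x` and vanishes. At `v = 0` the equation becomes
`E = 1 + x (1 - x) E²`, solved by `1 / (1 - x)`, whence `h_n(0) = 1`; `h_n(1) = r_n` simply counts
all paths.
-/

namespace PowerSeries

variable {R : Type*} [CommRing R]

theorem eq_zero_of_eq_X_mul_mul {f g : R⟦X⟧} (h : f = X * g * f) : f = 0 := by
  have hdvd (n : ℕ) : X ^ n ∣ f := by
    induction n with
    | zero => simp
    | succ n ih =>
      rw [h, pow_succ', mul_assoc]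
      exact mul_dvd_mul_left X (dvd_mul_of_dvd_right ih g)
  ext n
  simpa using X_pow_dvd_iff.mp (hdvd (n + 1)) n n.lt_succ_self

theorem eq_of_eq_one_add_X_mul_add_X_mul_sq {a b f g : R⟦X⟧}
    (hf : f = 1 + X * a * f + X * b * f ^ 2) (hg : g = 1 + X * a * g + X * b * g ^ 2) :
    f = g := by
  rw [← sub_eq_zero]
  apply eq_zero_of_eq_X_mul_mul (g := a + b * (f + g))
  linear_combination hf - hg

end PowerSeries

lemma List.prefix_append_cases {α : Type*} {p l₁ l₂ : List α} (h : p <+: l₁ ++ l₂) :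
    p <+: l₁ ∨ ∃ r, r <+: l₂ ∧ p = l₁ ++ r := by
  rcases le_total p.length l₁.length with hle | hle
  · exact .inl (List.prefix_of_prefix_length_le h (List.prefix_append _ _) hle)
  · obtain ⟨r, rfl⟩ := List.prefix_of_prefix_length_le (List.prefix_append _ _) h hle
    exact .inr ⟨r, (List.prefix_append_right_inj _).mp h, rfl⟩

instance : Fintype Step :=
  ⟨{.U, .D, .F}, by intro x; cases x <;> decide⟩

@[simp] lemma pathLen_nil : pathLen [] = 0 := rfl
@[simp] lemma pathAlt_nil : pathAlt [] = 0 := rfl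

@[simp] lemma pathLen_cons (a : Step) (w : List Step) : pathLen (a :: w) = a.len + pathLen w := by
  simp [pathLen]

@[simp] lemma pathAlt_cons (a : Step) (w : List Step) : pathAlt (a :: w) = a.alt + pathAlt w := by
  simp [pathAlt]

@[simp] lemma pathLen_append (w₁ w₂ : List Step) :
    pathLen (w₁ ++ w₂) = pathLen w₁ + pathLen w₂ := by
  simp [pathLen]

@[simp] lemma pathAlt_append (w₁ w₂ : List Step) :
    pathAlt (w₁ ++ w₂) = pathAlt w₁ + pathAlt w₂ := by
  simp [pathAlt]

lemma length_le_pathLen (w : List Step) : w.length ≤ pathLen w := by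
  induction w with
  | nil => simp
  | cons a t ih => cases a <;> simp [Step.len] <;> omega

lemma pathLen_add_pathAlt (w : List Step) :
    (pathLen w : ℤ) + pathAlt w = 2 * (w.count .U + w.count .F) := by
  induction w with
  | nil => simp
  | cons a t ih => cases a <;> simp [Step.len, Step.alt] <;> omega

lemma exists_first_neg_prefix {t : List Step} (h : ∃ p, p <+: t ∧ pathAlt p < 0) :
    ∃ w₁ a w₂, t = w₁ ++ a :: w₂ ∧ (∀ p, p <+: w₁ → 0 ≤ pathAlt p) ∧
      pathAlt (w₁ ++ [a]) < 0 := by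
  induction t using List.reverseRecOn with
  | nil =>
    obtain ⟨p, hp, hneg⟩ := h
    simp_all
  | append_singleton s a ih =>
    by_cases hs : ∃ p, p <+: s ∧ pathAlt p < 0
    · obtain ⟨w₁, b, w₂, rfl, hw₁, hneg⟩ := ih hs
      exact ⟨w₁, b, w₂ ++ [a], by simp, hw₁, hneg⟩
    · push Not at hs
      obtain ⟨p, hp, hneg⟩ := h
      rcases List.prefix_concat_iff.mp hp with rfl | hp
      · exact ⟨s, a, [], rfl, hs, hneg⟩
      · exact absurd (hs p hp) (not_le.mpr hneg)

@[simp] lemma ascents_nil : ascents [] = 0 := rfl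

lemma ascents_cons (a : Step) (t : List Step) :
    ascents (a :: t) = (if a = .U ∧ t.head? ≠ some .U then 1 else 0) + ascents t := by
  unfold ascents
  rw [List.length_cons, List.range_succ_eq_map, List.countP_cons, List.countP_map]
  have h0 : t[0]? = t.head? := by cases t <;> rfl
  simp [Function.comp_def, h0, add_comm]

lemma ascents_F_cons (t : List Step) : ascents (.F :: t) = ascents t := by
  simp [ascents_cons]

lemma ascents_U_cons (t : List Step) :
    ascents (.U :: t) = (if t.head? = some .U then 0 else 1) + ascents t := by
  rw [ascents_cons]
  split_ifs <;> simp_all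

lemma ascents_append_D_cons (w₁ w₂ : List Step) :
    ascents (w₁ ++ .D :: w₂) = ascents w₁ + ascents w₂ := by
  induction w₁ with
  | nil => simp [ascents_cons]
  | cons a t ih =>
    rw [List.cons_append, ascents_cons, ih, ascents_cons]
    rcases t with _ | ⟨b, t⟩
    · simp
    · simp [add_assoc]

lemma ascents_le_count (w : List Step) : ascents w ≤ w.count .U := by
  induction w with
  | nil => simp
  | cons a t ih =>
    rw [ascents_cons, List.count_cons]
    split_ifs with h <;> simp_all <;> omega

lemma ascents_U_cons_append_D_cons (w₁ w₂ : List Step) :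
    ascents (.U :: (w₁ ++ .D :: w₂)) = ascents (.U :: w₁) + ascents w₂ :=
  ascents_append_D_cons (.U :: w₁) w₂

namespace IsSchroeder

variable {n i j i' : ℕ} {w w₁ w₂ w₁' w₂' : List Step}

lemma of_prefix_nonneg (h₀ : pathAlt w = 0) (hpre : ∀ p, p <+: w → 0 ≤ pathAlt p) :
    IsSchroeder (w.count .U + w.count .F) w :=
  ⟨by have := pathLen_add_pathAlt w; omega, h₀, hpre⟩

lemma length_le (h : IsSchroeder n w) : w.length ≤ 2 * n :=
  h.1 ▸ length_le_pathLen w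

lemma ascents_le (h : IsSchroeder n w) : ascents w ≤ n := by
  have := pathLen_add_pathAlt w
  have := ascents_le_count w
  rw [h.1, h.2.1] at *
  omega

lemma nil : IsSchroeder 0 [] :=
  ⟨rfl, rfl, fun p hp => by rw [List.prefix_nil.mp hp]; rfl⟩

lemma eq_nil (h : IsSchroeder 0 w) : w = [] :=
  List.length_eq_zero_iff.mp (Nat.le_zero.mp h.length_le)

lemma append (h₁ : IsSchroeder i w₁) (h₂ : IsSchroeder j w₂) :
    IsSchroeder (i + j) (w₁ ++ w₂) := by
  obtain ⟨hlen₁, halt₁, hpre₁⟩ := h₁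
  obtain ⟨hlen₂, halt₂, hpre₂⟩ := h₂
  refine ⟨by simp [hlen₁, hlen₂]; ring, by simp [halt₁, halt₂], fun p hp => ?_⟩
  rcases List.prefix_append_cases hp with hp | ⟨r, hr, rfl⟩
  · exact hpre₁ p hp
  · simpa [halt₁] using hpre₂ r hr

lemma flat : IsSchroeder 1 [.F] :=
  ⟨rfl, rfl, fun p hp => by rcases List.prefix_cons_iff.mp hp with rfl | ⟨t, rfl, ht⟩ <;>
    simp_all [Step.alt]⟩

lemma elevate (h : IsSchroeder i w) : IsSchroeder (i + 1) (.U :: w ++ [.D]) := by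
  obtain ⟨hlen, halt, hpre⟩ := h
  refine ⟨by simp [hlen, Step.len]; ring, by simp [halt, Step.alt], fun p hp => ?_⟩
  rcases List.prefix_cons_iff.mp hp with rfl | ⟨q, rfl, hq⟩
  · rfl
  rcases List.prefix_concat_iff.mp hq with rfl | hq
  · simp [halt, Step.alt]
  · have := hpre q hq
    simp [Step.alt]
    omega

lemma F_cons (h : IsSchroeder n w) : IsSchroeder (n + 1) (.F :: w) := by
  simpa [add_comm] using flat.append h

lemma U_cons_append_D_cons (h₁ : IsSchroeder i w₁) (h₂ : IsSchroeder j w₂) :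
    IsSchroeder (i + j + 1) (.U :: (w₁ ++ .D :: w₂)) := by
  simpa [add_right_comm] using h₁.elevate.append h₂

lemma cases_succ (h : IsSchroeder (n + 1) w) :
    (∃ w', w = .F :: w' ∧ IsSchroeder n w') ∨
      ∃ i j w₁ w₂, i + j = n ∧ w = .U :: (w₁ ++ .D :: w₂) ∧
        IsSchroeder i w₁ ∧ IsSchroeder j w₂ := by
  obtain ⟨hlen, halt, hpre⟩ := h
  match w with
  | [] => simp at hlen
  | .D :: t => simpa [Step.alt] using hpre [.D] (by simp)
  | .F :: t =>
    refine .inl ⟨t, rfl, by simp [Step.len] at hlen; omega, by simpa [Step.alt] using halt,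
      fun p hp => by simpa [Step.alt] using hpre (.F :: p) (by simpa using hp)⟩
  | .U :: t =>
    have hpre' (p : List Step) (hp : p <+: t) : -1 ≤ pathAlt p := by
      have := hpre (.U :: p) (by simpa using hp)
      simp [Step.alt] at this
      omega
    have halt' : pathAlt t = -1 := by simp [Step.alt] at halt; omega
    -- `w₁ ++ [a]` is where `U :: t` first returns to the axis.
    obtain ⟨w₁, a, w₂, rfl, hw₁, hneg⟩ :=
      exists_first_neg_prefix ⟨t, List.prefix_refl t, by omega⟩
    have ha : a = .D ∧ pathAlt w₁ = 0 := by
      have := hw₁ w₁ (List.prefix_refl w₁)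
      have := hpre' (w₁ ++ [a]) (by simp)
      cases a <;> simp [Step.alt] at * <;> omega
    obtain ⟨rfl, halt₁⟩ := ha
    have halt₂ : pathAlt w₂ = 0 := by simp [Step.alt, halt₁] at halt'; omega
    have hw₂ (p : List Step) (hp : p <+: w₂) : 0 ≤ pathAlt p := by
      have := hpre' (w₁ ++ .D :: p) (by simpa using hp)
      simp [Step.alt, halt₁] at this
      omega
    refine .inr ⟨_, _, w₁, w₂, ?_, rfl, of_prefix_nonneg halt₁ hw₁, of_prefix_nonneg halt₂ hw₂⟩
    have := pathLen_add_pathAlt w₁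
    have := pathLen_add_pathAlt w₂
    simp [Step.len] at hlen
    omega

lemma length_le_of_append_D_cons_eq (h₁ : IsSchroeder i w₁) (h₁' : IsSchroeder i' w₁')
    (he : w₁ ++ .D :: w₂ = w₁' ++ .D :: w₂') : w₁'.length ≤ w₁.length := by
  by_contra! hlt
  have hp : w₁ ++ [.D] <+: w₁' :=
    List.prefix_of_prefix_length_le (l₃ := w₁' ++ .D :: w₂') (by simp [← he])
      (List.prefix_append _ _) (by simpa using hlt)
  simpa [h₁.2.1, Step.alt] using h₁'.2.2 _ hp

lemma append_D_cons_inj (h₁ : IsSchroeder i w₁) (h₁' : IsSchroeder i' w₁')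
    (he : w₁ ++ .D :: w₂ = w₁' ++ .D :: w₂') : w₁ = w₁' ∧ w₂ = w₂' := by
  have hlen := le_antisymm (length_le_of_append_D_cons_eq h₁' h₁ he.symm)
    (length_le_of_append_D_cons_eq h₁ h₁' he)
  obtain ⟨rfl, h⟩ := List.append_inj he hlen
  exact ⟨rfl, (List.cons.inj h).2⟩

end IsSchroeder

open Finset.HasAntidiagonal (antidiagonal mem_antidiagonal)

lemma setOf_isSchroeder_finite (n : ℕ) : {w | IsSchroeder n w}.Finite :=
  (List.finite_length_le Step (2 * n)).subset fun _ hw => IsSchroeder.length_le hw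

noncomputable def schroederPaths (n : ℕ) : Finset (List Step) :=
  (setOf_isSchroeder_finite n).toFinset

@[simp] lemma mem_schroederPaths {n : ℕ} {w : List Step} :
    w ∈ schroederPaths n ↔ IsSchroeder n w :=
  Set.Finite.mem_toFinset _

lemma schroederPaths_zero : schroederPaths 0 = {[]} := by
  ext w
  simpa using ⟨IsSchroeder.eq_nil, fun h => h ▸ IsSchroeder.nil⟩

lemma schroederPaths_succ (n : ℕ) :
    schroederPaths (n + 1) = (schroederPaths n).image (.F :: ·) ∪
      ((antidiagonal n).sigma fun p => schroederPaths p.1 ×ˢ schroederPaths p.2).image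
        fun x => .U :: (x.2.1 ++ .D :: x.2.2) := by
  ext w
  simp only [Finset.mem_union, Finset.mem_image, Finset.mem_sigma, Finset.mem_product,
    mem_antidiagonal, mem_schroederPaths, Sigma.exists, Prod.exists]
  constructor
  · intro hw
    rcases hw.cases_succ with ⟨w', rfl, h⟩ | ⟨i, j, w₁, w₂, hij, rfl, h₁, h₂⟩
    · exact .inl ⟨w', h, rfl⟩
    · exact .inr ⟨i, j, w₁, w₂, ⟨hij, h₁, h₂⟩, rfl⟩
  · rintro (⟨w', h, rfl⟩ | ⟨i, j, w₁, w₂, ⟨rfl, h₁, h₂⟩, rfl⟩)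
    · exact h.F_cons
    · exact h₁.U_cons_append_D_cons h₂

lemma filter_head_ne_U_schroederPaths_succ (n : ℕ) :
    (schroederPaths (n + 1)).filter (·.head? ≠ some .U) = (schroederPaths n).image (.F :: ·) := by
  ext w
  simp only [Finset.mem_filter, Finset.mem_image, mem_schroederPaths]
  constructor
  · rintro ⟨hw, hhead⟩
    rcases hw.cases_succ with ⟨w', rfl, h⟩ | ⟨_, _, _, _, _, rfl, _⟩
    · exact ⟨w', h, rfl⟩
    · simp at hhead
  · rintro ⟨w', h, rfl⟩
    exact ⟨h.F_cons, by simp⟩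

noncomputable def ascentPoly (n : ℕ) : Polynomial ℚ :=
  ∑ w ∈ schroederPaths n, Polynomial.X ^ ascents w

-- Counts the elevated paths `U w D` by ascents; the final `D` does not affect the count.
noncomputable def elevatedAscentPoly (n : ℕ) : Polynomial ℚ :=
  ∑ w ∈ schroederPaths n, Polynomial.X ^ ascents (.U :: w)

lemma ascentPoly_zero : ascentPoly 0 = 1 := by
  simp [ascentPoly, schroederPaths_zero]

lemma ascentPoly_succ (n : ℕ) : ascentPoly (n + 1) = ascentPoly n +
    ∑ p ∈ antidiagonal n, elevatedAscentPoly p.1 * ascentPoly p.2 := by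
  have hdisj : Disjoint ((schroederPaths n).image (.F :: ·))
      (((antidiagonal n).sigma fun p => schroederPaths p.1 ×ˢ schroederPaths p.2).image
        fun x => .U :: (x.2.1 ++ .D :: x.2.2)) := by
    simp [Finset.disjoint_left]
  have hinj : Set.InjOn (fun x : (_ : ℕ × ℕ) × List Step × List Step =>
      Step.U :: (x.2.1 ++ .D :: x.2.2))
      ((antidiagonal n).sigma fun p => schroederPaths p.1 ×ˢ schroederPaths p.2) := by
    rintro ⟨⟨i, j⟩, w₁, w₂⟩ hx ⟨⟨i', j'⟩, w₁', w₂'⟩ hx' he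
    simp only [Finset.coe_sigma, Set.mem_sigma_iff, Finset.mem_coe, mem_antidiagonal,
      Finset.mem_product, mem_schroederPaths, List.cons.injEq, true_and] at hx hx' he
    obtain ⟨rfl, rfl⟩ := hx.2.1.append_D_cons_inj hx'.2.1 he
    have := hx.2.1.1
    have := hx'.2.1.1
    obtain rfl : i = i' := by omega
    obtain rfl : j = j' := by omega
    rfl
  rw [ascentPoly, schroederPaths_succ, Finset.sum_union hdisj,
    Finset.sum_image (by simp), Finset.sum_image hinj, Finset.sum_sigma]
  congr 1
  · simp [ascentPoly, ascents_F_cons]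
  · refine Finset.sum_congr rfl fun p _ => ?_
    rw [Finset.sum_product, elevatedAscentPoly, ascentPoly, Finset.sum_mul_sum]
    simp [ascents_U_cons_append_D_cons, pow_add]

lemma elevatedAscentPoly_eq (n : ℕ) : elevatedAscentPoly n = ascentPoly n +
    (Polynomial.X - 1) * ∑ w ∈ (schroederPaths n).filter (·.head? ≠ some .U),
      Polynomial.X ^ ascents w := by
  rw [Finset.sum_filter, Finset.mul_sum, ascentPoly, elevatedAscentPoly,
    ← Finset.sum_add_distrib]
  refine Finset.sum_congr rfl fun w _ => ?_
  by_cases h : w.head? = some .U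
  · simp [ascents_U_cons, h]
  · simp [ascents_U_cons, h]
    ring

lemma mk_ascentPoly_eq :
    mk ascentPoly = 1 + X * mk ascentPoly + X * mk elevatedAscentPoly * mk ascentPoly := by
  ext (_ | n) : 1
  · simp [ascentPoly_zero]
  · rw [mul_assoc, map_add, map_add, coeff_succ_X_mul, coeff_succ_X_mul, coeff_mul]
    simp [ascentPoly_succ]

lemma mk_elevatedAscentPoly_eq :
    mk elevatedAscentPoly = mk ascentPoly + C (Polynomial.X - 1) * (1 + X * mk ascentPoly) := by
  ext (_ | n) : 1
  · simp [elevatedAscentPoly_eq, ascentPoly_zero, schroederPaths_zero, Finset.filter_singleton]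
  · rw [map_add, coeff_C_mul, map_add, coeff_succ_X_mul, coeff_mk, coeff_mk, coeff_mk,
      elevatedAscentPoly_eq, filter_head_ne_U_schroederPaths_succ, Finset.sum_image (by simp)]
    simp [ascentPoly, ascents_F_cons]

lemma hpoly_eq_ascentPoly : hpoly = ascentPoly := by
  funext n
  have hcount (k : ℕ) : ascCount n k = ((schroederPaths n).filter (ascents · = k)).card := by
    rw [ascCount, ← Nat.card_eq_finsetCard]
    exact Nat.card_congr (Equiv.subtypeEquivRight fun w => by simp)
  rw [hpoly, ascentPoly, ← Finset.sum_fiberwise_of_maps_to (g := ascents) (t := Finset.range (n + 1))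
    fun w hw => Finset.mem_range_succ_iff.mpr (mem_schroederPaths.mp hw).ascents_le]
  refine Finset.sum_congr rfl fun k _ => ?_
  rw [Finset.sum_congr rfl fun w hw => by rw [(Finset.mem_filter.mp hw).2], hcount]
  simp

theorem mk_hpoly_eq :
    mk hpoly = 1 + X * vv * mk hpoly + X * (1 + X * (vv - 1)) * mk hpoly ^ 2 := by
  have hv : C (Polynomial.X - 1) = vv - 1 := by simp [vv]
  have hP := mk_elevatedAscentPoly_eq
  rw [hv] at hP
  rw [hpoly_eq_ascentPoly]
  linear_combination mk_ascentPoly_eq + X * mk ascentPoly * hP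

lemma hpoly_eval_one (n : ℕ) : (hpoly n).eval 1 = schroederCount n := by
  have : schroederCount n = (schroederPaths n).card := by
    rw [schroederCount, ← Nat.card_eq_finsetCard]
    exact Nat.card_congr (Equiv.subtypeEquivRight fun w => by simp)
  simp [hpoly_eq_ascentPoly, ascentPoly, Polynomial.eval_finsetSum, this]

lemma hpoly_eval_zero (n : ℕ) : (hpoly n).eval 0 = 1 := by
  let φ := Polynomial.evalRingHom (0 : ℚ)
  have hmap : map φ (mk hpoly) = mk 1 := by
    apply eq_of_eq_one_add_X_mul_add_X_mul_sq (a := 0) (b := 1 - X)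
    · conv_lhs => rw [mk_hpoly_eq]
      simp only [map_add, map_mul, map_pow, map_sub, map_one, map_X, vv, map_C, φ,
        Polynomial.coe_evalRingHom, Polynomial.eval_X, map_zero]
      ring
    · linear_combination (1 - X * mk 1) * mk_one_mul_one_sub_eq_one ℚ
  simpa [φ] using congrArg (coeff n) hmap

theorem stmt19 (E : PowerSeries (Polynomial ℚ))
    (hEdef : E = PowerSeries.mk hpoly) :
    (constantCoeff E = 1 ∧
      E = 1 + X * vv * E + X * (1 + X * (vv - 1)) * E ^ 2 ∧
      ∀ E' : PowerSeries (Polynomial ℚ), constantCoeff E' = 1 →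
        E' = 1 + X * vv * E' + X * (1 + X * (vv - 1)) * E' ^ 2 → E' = E) ∧
    (∀ n : ℕ, Polynomial.eval (1 : ℚ) (hpoly n) = (schroederCount n : ℚ)) ∧
    (∀ n : ℕ, Polynomial.eval (0 : ℚ) (hpoly n) = 1) := by
  subst hEdef
  refine ⟨⟨?_, mk_hpoly_eq, fun E' _ hE' => eq_of_eq_one_add_X_mul_add_X_mul_sq hE' mk_hpoly_eq⟩,
    hpoly_eval_one, hpoly_eval_zero⟩
  simp [hpoly_eq_ascentPoly, ascentPoly_zero]
end
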